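/- Let S be a k-shredder of G, let C be the component of G \ S of largest volume, let x be a vertex in some other component Q_x of G \ S, and let Π be a set of k openly-disjoint paths from x ending in C. Then every component of G \ S other than C and Q_x is also a connected component of G \ (vertices of Π). -/

import Mathlib

/-!
Every path of `Π` runs from `Q_x` to `C`, so it meets `S`; and a vertex of `S` lies on at most
one path, since distinct paths share only `x` and possibly their common end, neither of which is
in `S`. As `|S| = k`, each path meets `S` in exactly one vertex and `S` is covered by `Π`.
A path through a third component `Q` would have to cross `S` both before and after `Q`, so `Π`
misses `Q`. Hence `Q`, a component of `G \ S`, stays a component after deleting `V(Π) ⊇ S`.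
-/

open SimpleGraph

variable {V : Type*}

/-- The graph `G` with the vertices of `S` removed (vertices in `S` become isolated). -/
def delAdj (G : SimpleGraph V) (S : Set V) : SimpleGraph V where
  Adj u v := G.Adj u v ∧ u ∉ S ∧ v ∉ S
  symm := ⟨fun u v ⟨h, hu, hv⟩ => ⟨h.symm, hv, hu⟩⟩
  loopless := ⟨fun v h => G.irrefl h.1⟩

/-- The subgraph of `G` induced on the vertex set `A` (other vertices become isolated). -/
def restrict (G : SimpleGraph V) (A : Set V) : SimpleGraph V where
  Adj u v := G.Adj u v ∧ u ∈ A ∧ v ∈ A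
  symm := ⟨fun u v ⟨h, hu, hv⟩ => ⟨h.symm, hv, hu⟩⟩
  loopless := ⟨fun v h => G.irrefl h.1⟩

/-- `C` is a connected component of `G \ S`. -/
def IsComp (G : SimpleGraph V) (S C : Set V) : Prop :=
  ∃ v, v ∉ S ∧ C = {u | (delAdj G S).Reachable v u}

/-- The number of connected components of `G \ S`. -/
noncomputable def numComp (G : SimpleGraph V) (S : Set V) : ℕ :=
  {C : Set V | IsComp G S C}.ncard

/-- The volume of a vertex set `Q`: the number of edges with at least one endpoint in `Q`. -/
noncomputable def vol (G : SimpleGraph V) (Q : Set V) : ℕ :=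
  {e ∈ G.edgeSet | ∃ v ∈ Q, v ∈ e}.ncard

/-- `S` is a `k`-shredder: it has `k` vertices and `G \ S` has at least three components. -/
def IsShredder (G : SimpleGraph V) (k : ℕ) (S : Set V) : Prop :=
  S.ncard = k ∧ 3 ≤ numComp G S

/-- `G` is `k`-vertex-connected: it has more than `k` vertices and stays connected
after removing any set of fewer than `k` vertices. -/
def KConnected (G : SimpleGraph V) (k : ℕ) [Fintype V] : Prop :=
  k < Fintype.card V ∧
    ∀ S : Set V, S.ncard < k → ∀ u v, u ∉ S → v ∉ S → (delAdj G S).Reachable u v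

/-- `u` is an ancestor of `v` (or equal to it) in the tree `T` rooted at `r`:
every walk from the root to `v` passes through `u`. -/
def AncOf (T : SimpleGraph V) (r u v : V) : Prop :=
  ∀ p : T.Walk r v, u ∈ p.support

/-- `IsDFSTree G W r T` : `T` is a spanning tree of the induced graph `G[W]` that can be
produced by a depth-first search from `r ∈ W`:  DFS picks a neighbor `w` of `r`, recursively
explores the whole component of `w` in `G[W \ {r}]`, and then continues from `r` on the rest. -/
inductive IsDFSTree (G : SimpleGraph V) : Set V → V → SimpleGraph V → Prop
  | single (r : V) : IsDFSTree G {r} r ⊥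
  | step (W : Set V) (r w : V) (T₁ T₂ : SimpleGraph V)
      (hr : r ∈ W) (hw : w ∈ W) (hadj : G.Adj r w)
      (hT₁ : IsDFSTree G {u | (restrict G (W \ {r})).Reachable w u} w T₁)
      (hT₂ : IsDFSTree G (W \ {u | (restrict G (W \ {r})).Reachable w u}) r T₂) :
      IsDFSTree G W r (T₁ ⊔ T₂ ⊔ fromEdgeSet {s(r, w)})

/-- `C` is an internal component of `T \ U`: a component whose root (its vertex closest to the
root `r` of `T`, i.e. the vertex of `C` that is an ancestor of all of `C`) is an ancestor of
some vertex of `U`. -/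
def InternalComp (T : SimpleGraph V) (r : V) (U C : Set V) : Prop :=
  IsComp T U C ∧ ∃ ρ ∈ C, (∀ v ∈ C, AncOf T r ρ v) ∧ ∃ u ∈ U, AncOf T r ρ u

/-- `Straddles sup A S`: the set `A` (attachments of a bridge, or a candidate) straddles `S`
with respect to the paths whose supports are `sup i`: on some path an `A`-vertex strictly
precedes an `S`-vertex, and on some path an `A`-vertex strictly succeeds an `S`-vertex. -/
def Straddles [DecidableEq V] {k : ℕ} (sup : Fin k → List V) (A S : Set V) : Prop :=
  (∃ i, ∃ u ∈ A, u ∈ sup i ∧ ∃ s ∈ S, s ∈ sup i ∧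
      (sup i).idxOf u < (sup i).idxOf s) ∧
  (∃ j, ∃ v ∈ A, v ∈ sup j ∧ ∃ s ∈ S, s ∈ sup j ∧
      (sup j).idxOf s < (sup j).idxOf v)

/-- `IsBridgeAttach G PiV pedges Γ A` : `Γ` is a bridge of the path system with vertex set
`PiV` and edge lists `pedges i`, and `A` is its attachment set.  A bridge is either a
connected component of `G \ PiV` (attachments: its neighborhood), or an edge of `G` not on
any of the paths but with both endpoints on the paths (attachments: its two endpoints). -/
def IsBridgeAttach (G : SimpleGraph V) {k : ℕ} (PiV : Set V)
    (pedges : Fin k → List (Sym2 V)) (Γ A : Set V) : Prop :=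
  (IsComp G PiV Γ ∧ A = {v | v ∉ Γ ∧ ∃ u ∈ Γ, G.Adj u v}) ∨
  (∃ u v, G.Adj u v ∧ u ∈ PiV ∧ v ∈ PiV ∧ (∀ i, s(u, v) ∉ pedges i) ∧
    Γ = {u, v} ∧ A = {u, v})

section Components

variable {G : SimpleGraph V} {S T A B Q : Set V}

lemma SimpleGraph.Walk.reachable_delAdj {a b : V} (w : G.Walk a b)
    (h : ∀ v ∈ w.support, v ∉ S) : (delAdj G S).Reachable a b := by
  induction w with
  | nil => exact Reachable.refl _
  | cons hadj w ih =>
    exact (Adj.reachable (G := delAdj G S) ⟨hadj, h _ (by simp), h _ (by simp)⟩).trans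
      (ih fun t ht ↦ h t (by simp [ht]))

lemma delAdj_anti (hST : S ⊆ T) : delAdj G T ≤ delAdj G S :=
  fun _ _ h ↦ ⟨h.1, fun hS ↦ h.2.1 (hST hS), fun hS ↦ h.2.2 (hST hS)⟩

namespace IsComp

lemma mem_of_reachable (hA : IsComp G S A) {a u : V} (ha : a ∈ A)
    (h : (delAdj G S).Reachable a u) : u ∈ A := by
  obtain ⟨c, -, rfl⟩ := hA
  exact Reachable.trans ha h

lemma reachable_of_mem (hA : IsComp G S A) {a u : V} (ha : a ∈ A) (hu : u ∈ A) :
    (delAdj G S).Reachable a u := by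
  obtain ⟨c, -, rfl⟩ := hA
  exact Reachable.trans (Reachable.symm ha) hu

lemma notMem (hA : IsComp G S A) {u : V} (hu : u ∈ A) : u ∉ S := by
  obtain ⟨c, hc, rfl⟩ := hA
  obtain ⟨w⟩ := hu
  cases hw : w.reverse with
  | nil => exact hc
  | cons h _ => exact h.2.1

lemma eq_of_mem (hA : IsComp G S A) (hB : IsComp G S B) {v : V} (hvA : v ∈ A) (hvB : v ∈ B) :
    A = B := by
  ext u
  exact ⟨fun hu ↦ hB.mem_of_reachable hvB (hA.reachable_of_mem hvA hu),
    fun hu ↦ hA.mem_of_reachable hvA (hB.reachable_of_mem hvB hu)⟩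

lemma exists_mem_support_of_ne (hA : IsComp G S A) (hB : IsComp G S B) (hAB : A ≠ B)
    {a b : V} (ha : a ∈ A) (hb : b ∈ B) (w : G.Walk a b) : ∃ t ∈ w.support, t ∈ S := by
  by_contra! h
  exact hAB (hA.eq_of_mem hB (hA.mem_of_reachable ha (w.reachable_delAdj h)) hb)

lemma of_subset_of_forall_notMem (hQ : IsComp G S Q) (hST : S ⊆ T) (hQT : ∀ v ∈ Q, v ∉ T) :
    IsComp G T Q := by
  classical
  obtain ⟨c, hc, rfl⟩ := id hQ
  have hle : delAdj G S ≤ G := fun _ _ h ↦ h.1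
  refine ⟨c, hQT c (Reachable.refl _), Set.ext fun u ↦ ⟨fun hu ↦ ?_, fun hu ↦ ?_⟩⟩
  · obtain ⟨w⟩ := hu
    refine (w.map (Hom.ofLE hle)).reachable_delAdj fun v hv ↦ hQT v ?_
    rw [Walk.support_map] at hv
    obtain ⟨t, ht, rfl⟩ := List.mem_map.mp hv
    exact ⟨w.takeUntil t ht⟩
  · exact hu.mono (delAdj_anti hST)

end IsComp

lemma SimpleGraph.Walk.IsPath.not_subsingleton_support_inter {a b v : V} {w : G.Walk a b}
    (hw : w.IsPath) (hA : IsComp G S A) (hB : IsComp G S B) (hQ : IsComp G S Q)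
    (hQA : Q ≠ A) (hQB : Q ≠ B) (ha : a ∈ A) (hb : b ∈ B) (hv : v ∈ w.support) (hvQ : v ∈ Q) :
    ¬ ({t | t ∈ w.support} ∩ S).Subsingleton := by
  obtain ⟨q, r, -, -, rfl⟩ := hw.mem_support_iff_exists_append.mp hv
  obtain ⟨t, ht, htS⟩ := hA.exists_mem_support_of_ne hQ (Ne.symm hQA) ha hvQ q
  obtain ⟨u, hu, huS⟩ := hQ.exists_mem_support_of_ne hB hQB hvQ hb r
  have huv : u ≠ v := fun h ↦ hQ.notMem hvQ (h ▸ huS)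
  intro hS
  exact hw.ne_of_mem_support_of_append huv ht hu <|
    hS ⟨(Walk.mem_support_append_iff q r).mpr (Or.inl ht), htS⟩
      ⟨(Walk.mem_support_append_iff q r).mpr (Or.inr hu), huS⟩

end Components

section Pigeonhole

variable {α ι : Type*} {S : Set α} {P : ι → Set α}

lemma Set.range_eq_of_pairwise_disjoint_inter
    (hP : Pairwise fun i j ↦ Disjoint (P i ∩ S) (P j ∩ S))
    (hS : S.ncard ≤ Nat.card ι) (hfin : S.Finite) {s : ι → α} (hs : ∀ i, s i ∈ P i ∩ S) :
    Set.range s = S := by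
  have hinj : Function.Injective s := fun i j hij ↦ by
    by_contra hne
    exact Set.disjoint_left.mp (hP hne) (hs i) (hij ▸ hs j)
  refine Set.eq_of_subset_of_ncard_le ?_ ?_ hfin
  · rintro _ ⟨i, rfl⟩
    exact (hs i).2
  · rwa [Set.ncard_range_of_injective hinj]

lemma Set.subset_iUnion_of_pairwise_disjoint_inter
    (hP : Pairwise fun i j ↦ Disjoint (P i ∩ S) (P j ∩ S))
    (hmeet : ∀ i, (P i ∩ S).Nonempty) (hS : S.ncard ≤ Nat.card ι) (hfin : S.Finite) :
    S ⊆ ⋃ i, P i := by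
  choose s hs using hmeet
  rw [← Set.range_eq_of_pairwise_disjoint_inter hP hS hfin hs]
  rintro _ ⟨i, rfl⟩
  exact Set.mem_iUnion.mpr ⟨i, (hs i).1⟩

lemma Set.subsingleton_inter_of_pairwise_disjoint_inter
    (hP : Pairwise fun i j ↦ Disjoint (P i ∩ S) (P j ∩ S)) (hmeet : ∀ i, (P i ∩ S).Nonempty)
    (hS : S.ncard ≤ Nat.card ι) (hfin : S.Finite) (i : ι) : (P i ∩ S).Subsingleton := by
  choose s hs using hmeet
  have hrange := Set.range_eq_of_pairwise_disjoint_inter hP hS hfin hs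
  suffices h : ∀ t ∈ P i ∩ S, t = s i from fun t ht u hu ↦ (h t ht).trans (h u hu).symm
  intro t ht
  obtain ⟨j, rfl⟩ := hrange.symm ▸ ht.2
  by_contra hne
  exact Set.disjoint_left.mp (hP fun hji ↦ hne (congrArg s hji)) (hs j) ht

end Pigeonhole

lemma pairwise_disjoint_support_inter_of_notMem {G : SimpleGraph V} {ι : Type*} {S : Set V} {x : V}
    {ends : ι → V} {p : ∀ i, G.Walk x (ends i)}
    (hdisj : ∀ i j, i ≠ j → ∀ v, v ∈ (p i).support → v ∈ (p j).support →
      v = x ∨ (v = ends i ∧ v = ends j))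
    (hx : x ∉ S) (hends : ∀ i, ends i ∉ S) :
    Pairwise fun i j ↦ Disjoint ({v | v ∈ (p i).support} ∩ S) ({v | v ∈ (p j).support} ∩ S) := by
  intro i j hij
  refine Set.disjoint_left.mpr ?_
  rintro v ⟨hvi, hvS⟩ ⟨hvj, -⟩
  rcases hdisj i j hij v hvi hvj with rfl | ⟨rfl, -⟩
  exacts [hx hvS, hends i hvS]

theorem stmt_1_general [Fintype V] (G : SimpleGraph V) (k : ℕ)
    (S : Set V) (hS : IsShredder G k S)
    (C : Set V) (hC : IsComp G S C)
    (Qx : Set V) (hQx : IsComp G S Qx) (hQxC : Qx ≠ C)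
    (x : V) (hx : x ∈ Qx)
    (ends : Fin k → V) (hends : ∀ i, ends i ∈ C)
    (p : ∀ i, G.Walk x (ends i)) (hp : ∀ i, (p i).IsPath)
    (hdisj : ∀ i j, i ≠ j → ∀ v, v ∈ (p i).support → v ∈ (p j).support →
      v = x ∨ (v = ends i ∧ v = ends j)) :
    ∀ Q, IsComp G S Q → Q ≠ C → Q ≠ Qx →
      IsComp G {v | ∃ i, v ∈ (p i).support} Q := by
  intro Q hQ hQC hQQx
  have hP := pairwise_disjoint_support_inter_of_notMem hdisj (hQx.notMem hx)
    fun i ↦ hC.notMem (hends i)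
  have hmeet : ∀ i, ({v | v ∈ (p i).support} ∩ S).Nonempty := fun i ↦
    hQx.exists_mem_support_of_ne hC hQxC hx (hends i) (p i)
  have hcard : S.ncard ≤ Nat.card (Fin k) := by simp [hS.1]
  refine hQ.of_subset_of_forall_notMem (fun t ht ↦ ?_) ?_
  · exact Set.mem_iUnion.mp (Set.subset_iUnion_of_pairwise_disjoint_inter hP hmeet hcard
      S.toFinite ht)
  · rintro v hvQ ⟨i, hvi⟩
    exact (hp i).not_subsingleton_support_inter hQx hC hQ hQQx hQC hx (hends i) hvi hvQ
      (Set.subsingleton_inter_of_pairwise_disjoint_inter hP hmeet hcard S.toFinite i)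

/-- if `S` is a `k`-shredder, `C` its largest-volume component, `x` a vertex of
another component `Qx`, and `Π` a family of `k` openly-disjoint paths from `x` ending in `C`,
then every component of `G \ S` other than `C` and `Qx` is a component of `G` minus the
vertices of `Π`. -/
theorem stmt_1 [Fintype V] [DecidableEq V] (G : SimpleGraph V) (k : ℕ)
    (hG : KConnected G k) (S : Set V) (hS : IsShredder G k S)
    (C : Set V) (hC : IsComp G S C) (hCmax : ∀ C', IsComp G S C' → vol G C' ≤ vol G C)
    (Qx : Set V) (hQx : IsComp G S Qx) (hQxC : Qx ≠ C)
    (x : V) (hx : x ∈ Qx)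
    (ends : Fin k → V) (hends : ∀ i, ends i ∈ C)
    (p : ∀ i, G.Walk x (ends i)) (hp : ∀ i, (p i).IsPath)
    (hdisj : ∀ i j, i ≠ j → ∀ v, v ∈ (p i).support → v ∈ (p j).support →
      v = x ∨ (v = ends i ∧ v = ends j)) :
    ∀ Q, IsComp G S Q → Q ≠ C → Q ≠ Qx →
      IsComp G {v | ∃ i, v ∈ (p i).support} Q :=
  stmt_1_general G k S hS C hC Qx hQx hQxC x hx ends hends p hp hdisj
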